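/- For any real m × n matrices A and B (with m ≤ n), Tr(AᵀB) ≤ ∑_{i=1}^m σᵢ(A) σᵢ(B), where σ₁(·) ≥ ⋯ ≥ σ_m(·) ≥ 0 are the singular values (von Neumann's trace inequality). -/

import Mathlib

/-- The singular values of a real matrix (unsorted): square roots of the
eigenvalues of `A * Aᵀ`. -/
noncomputable def svUnsorted {m n : ℕ} (A : Matrix (Fin m) (Fin n) ℝ) : Fin m → ℝ :=
  fun i => Real.sqrt ((Matrix.isHermitian_mul_conjTranspose_self A).eigenvalues i)

/-- `singularValues A i` is the `i`-th largest singular value of `A`. -/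
noncomputable def singularValues {m n : ℕ} (A : Matrix (Fin m) (Fin n) ℝ) : Fin m → ℝ :=
  fun i => svUnsorted A (Tuple.sort (fun j => - svUnsorted A j) i)

/-!
Mirsky's proof. Let `u` and `w` be orthonormal eigenbases of `A Aᵀ` and `B Bᵀ`, sorted by decreasing
eigenvalue. Then `x i = Aᵀ u i` and `y j = Bᵀ w j` are orthogonal with `‖x i‖ = σᵢ(A)` and
`‖y j‖ = σⱼ(B)`, and `Tr(AᵀB) = ∑ i j, ⟪u i, w j⟫ ⟪x i, y j⟫ = ∑ i j, σᵢ(A) σⱼ(B) c i j d i j`,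
where `c` and `d` are cross-Gram matrices of orthogonal families of vectors of norm at most one. By
Bessel's inequality the entrywise squares `c²` and `d²` are doubly substochastic, hence so is
`(c² + d²) / 2 ≥ c d`. Every doubly substochastic matrix is dominated by a doubly stochastic one,
and for those Birkhoff's theorem reduces `∑ i j, σᵢ(A) σⱼ(B) D i j ≤ ∑ i, σᵢ(A) σᵢ(B)` to the
rearrangement inequality.
-/

open Finset Matrix

open scoped RealInnerProductSpace

namespace Matrix

structure IsDoublySubstochastic {ι : Type*} [Fintype ι] (E : Matrix ι ι ℝ) : Prop where
  nonneg : ∀ i j, 0 ≤ E i j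
  sum_row_le_one : ∀ i, ∑ j, E i j ≤ 1
  sum_col_le_one : ∀ j, ∑ i, E i j ≤ 1

variable {ι : Type*} [Fintype ι]

theorem convex_isDoublySubstochastic :
    Convex ℝ {E : Matrix ι ι ℝ | E.IsDoublySubstochastic} := by
  intro P hP Q hQ a b ha hb hab
  refine ⟨fun i j => ?_, fun i => ?_, fun j => ?_⟩
  · simp only [add_apply, smul_apply, smul_eq_mul]
    exact add_nonneg (mul_nonneg ha (hP.nonneg i j)) (mul_nonneg hb (hQ.nonneg i j))
  · simp only [add_apply, smul_apply, smul_eq_mul, sum_add_distrib, ← mul_sum]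
    nlinarith [hP.sum_row_le_one i, hQ.sum_row_le_one i]
  · simp only [add_apply, smul_apply, smul_eq_mul, sum_add_distrib, ← mul_sum]
    nlinarith [hP.sum_col_le_one j, hQ.sum_col_le_one j]

variable {E : Matrix ι ι ℝ}

section DecidableEq

variable [DecidableEq ι]

theorem sum_mul_mul_le_sum_mul_of_mem_doublyStochastic {f g : ι → ℝ} (hfg : Monovary f g)
    {D : Matrix ι ι ℝ} (hD : D ∈ doublyStochastic ℝ ι) :
    ∑ i, ∑ j, f i * g j * D i j ≤ ∑ i, f i * g i := by
  have hD : D ∈ convexHull ℝ {σ.permMatrix ℝ | σ : Equiv.Perm ι} := by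
    rw [← doublyStochastic_eq_convexHull_permMatrix]
    exact hD
  have hlin : IsLinearMap ℝ fun M : Matrix ι ι ℝ => ∑ i, ∑ j, f i * g j * M i j :=
    ⟨fun M N => by simp only [add_apply, mul_add, sum_add_distrib],
     fun c M => by simp only [smul_apply, smul_eq_mul, mul_sum, mul_left_comm c]⟩
  refine convexHull_min ?_ (convex_halfSpace_le hlin _) hD
  rintro _ ⟨σ, rfl⟩
  simpa [Equiv.Perm.permMatrix, PEquiv.toMatrix_apply] using
    hfg.sum_mul_comp_perm_le_sum_mul (σ := σ)

/-- The row deficits `r` and the column deficits `c` have the same total `s`, so adding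
`s⁻¹ • r cᵀ` fills both. -/
theorem IsDoublySubstochastic.exists_mem_doublyStochastic_le (hE : E.IsDoublySubstochastic) :
    ∃ D ∈ doublyStochastic ℝ ι, ∀ i j, E i j ≤ D i j := by
  set r : ι → ℝ := fun i => 1 - ∑ j, E i j
  set c : ι → ℝ := fun j => 1 - ∑ i, E i j
  set s := ∑ i, r i
  have hr : ∀ i, 0 ≤ r i := fun i => sub_nonneg.2 (hE.sum_row_le_one i)
  have hc : ∀ j, 0 ≤ c j := fun j => sub_nonneg.2 (hE.sum_col_le_one j)
  have hcs : ∑ j, c j = s := by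
    simp only [c, s, r, sum_sub_distrib, sum_comm (γ := ι)]
  have cancel : ∀ t : ι → ℝ, (∀ i, 0 ≤ t i) → ∑ i, t i = s → ∀ i, s⁻¹ * t i * s = t i := by
    intro t ht hts i
    rcases eq_or_ne s 0 with hs | hs
    · rw [← hts] at hs
      simp [(sum_eq_zero_iff_of_nonneg fun i _ => ht i).1 hs i]
    · field_simp
  have hF : ∀ i j, 0 ≤ s⁻¹ * (r i * c j) := fun i j =>
    mul_nonneg (inv_nonneg.2 (sum_nonneg fun i _ => hr i)) (mul_nonneg (hr i) (hc j))
  refine ⟨E + s⁻¹ • vecMulVec r c, mem_doublyStochastic_iff_sum.2 ⟨fun i j => ?_, fun i => ?_,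
    fun j => ?_⟩, fun i j => le_add_of_nonneg_right (hF i j)⟩
  · exact add_nonneg (hE.nonneg i j) (hF i j)
  · calc ∑ j, (E + s⁻¹ • vecMulVec r c) i j = ∑ j, E i j + s⁻¹ * r i * ∑ j, c j := by
          simp [vecMulVec_apply, sum_add_distrib, mul_sum, mul_assoc]
      _ = 1 := by rw [hcs, cancel r hr rfl]; ring
  · calc ∑ i, (E + s⁻¹ • vecMulVec r c) i j = ∑ i, E i j + s⁻¹ * c j * ∑ i, r i := by
          simp [vecMulVec_apply, sum_add_distrib, mul_sum, sum_mul, mul_comm, mul_left_comm,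
            mul_assoc]
      _ = 1 := by rw [cancel c hc hcs]; ring

end DecidableEq

theorem IsDoublySubstochastic.sum_mul_mul_le_sum_mul (hE : E.IsDoublySubstochastic)
    {f g : ι → ℝ} (hf : 0 ≤ f) (hg : 0 ≤ g) (hfg : Monovary f g) :
    ∑ i, ∑ j, f i * g j * E i j ≤ ∑ i, f i * g i := by
  classical
  obtain ⟨D, hD, hED⟩ := hE.exists_mem_doublyStochastic_le
  calc ∑ i, ∑ j, f i * g j * E i j ≤ ∑ i, ∑ j, f i * g j * D i j :=
        sum_le_sum fun i _ => sum_le_sum fun j _ =>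
          mul_le_mul_of_nonneg_left (hED i j) (mul_nonneg (hf i) (hg j))
    _ ≤ ∑ i, f i * g i := sum_mul_mul_le_sum_mul_of_mem_doublyStochastic hfg hD

end Matrix

section InnerProductSpace

variable {E F : Type*} [NormedAddCommGroup E] [InnerProductSpace ℝ E]
  [NormedAddCommGroup F] [InnerProductSpace ℝ F] {ι : Type*}

theorem sum_sq_inner_le_norm_sq [Fintype ι] {v : ι → E} (hv : Pairwise fun i j => ⟪v i, v j⟫ = 0)
    (hv1 : ∀ i, ‖v i‖ ≤ 1) (x : E) : ∑ i, ⟪v i, x⟫ ^ 2 ≤ ‖x‖ ^ 2 := by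
  set z := ∑ i, ⟪v i, x⟫ • v i
  have hzx : ⟪x, z⟫ = ∑ i, ⟪v i, x⟫ ^ 2 := by
    simp only [z, inner_sum, real_inner_smul_right, real_inner_comm x, sq]
  have hzz : ‖z‖ ^ 2 = ∑ i, ⟪v i, x⟫ ^ 2 * ‖v i‖ ^ 2 := by
    rw [← real_inner_self_eq_norm_sq]
    simp only [z, sum_inner, inner_sum, real_inner_smul_left, real_inner_smul_right]
    refine sum_congr rfl fun i _ => ?_
    rw [sum_eq_single i (fun j _ hji => by rw [hv hji]; ring) (by simp),
      real_inner_self_eq_norm_sq]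
    ring
  have hzz_le : ‖z‖ ^ 2 ≤ ∑ i, ⟪v i, x⟫ ^ 2 := hzz ▸ sum_le_sum fun i _ =>
    mul_le_of_le_one_right (sq_nonneg _) (pow_le_one₀ (norm_nonneg _) (hv1 i))
  linarith [norm_sub_sq_real x z, sq_nonneg ‖x - z‖]

theorem isDoublySubstochastic_of_inner_sq [Fintype ι] {v w : ι → E}
    (hv : Pairwise fun i j => ⟪v i, v j⟫ = 0) (hv1 : ∀ i, ‖v i‖ ≤ 1)
    (hw : Pairwise fun i j => ⟪w i, w j⟫ = 0) (hw1 : ∀ i, ‖w i‖ ≤ 1) :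
    (Matrix.of fun i j => ⟪v i, w j⟫ ^ 2).IsDoublySubstochastic where
  nonneg i j := sq_nonneg _
  sum_row_le_one i := by
    simpa only [of_apply, real_inner_comm (v i), one_pow] using
      (sum_sq_inner_le_norm_sq hw hw1 (v i)).trans (pow_le_one₀ (norm_nonneg _) (hv1 i))
  sum_col_le_one j := by
    simpa only [of_apply, one_pow] using
      (sum_sq_inner_le_norm_sq hv hv1 (w j)).trans (pow_le_one₀ (norm_nonneg _) (hw1 j))

theorem pairwise_inner_normalize_eq_zero {x : ι → E} (hx : Pairwise fun i j => ⟪x i, x j⟫ = 0) :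
    Pairwise fun i j => ⟪NormedSpace.normalize (x i), NormedSpace.normalize (x j)⟫ = 0 :=
  fun i j hij => by
    simp only [NormedSpace.normalize, real_inner_smul_left, real_inner_smul_right, hx hij,
      mul_zero]

theorem norm_normalize_le_one (x : E) : ‖NormedSpace.normalize x‖ ≤ 1 := by
  rcases eq_or_ne x 0 with rfl | hx
  · simp
  · exact (NormedSpace.norm_normalize hx).le

theorem inner_eq_norm_mul_norm_mul_inner_normalize (x y : E) :
    ⟪x, y⟫ = ‖x‖ * ‖y‖ * ⟪NormedSpace.normalize x, NormedSpace.normalize y⟫ := by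
  conv_lhs => rw [← NormedSpace.norm_smul_normalize x, ← NormedSpace.norm_smul_normalize y]
  rw [real_inner_smul_left, real_inner_smul_right, mul_assoc]

theorem sum_inner_mul_inner_le_sum_norm_mul_norm [Fintype ι] {u w : ι → E} {x y : ι → F}
    (hu : Orthonormal ℝ u) (hw : Orthonormal ℝ w)
    (hx : Pairwise fun i j => ⟪x i, x j⟫ = 0)
    (hy : Pairwise fun i j => ⟪y i, y j⟫ = 0)
    (hxy : Monovary (fun i => ‖x i‖) fun i => ‖y i‖) :
    ∑ i, ∑ j, ⟪u i, w j⟫ * ⟪x i, y j⟫ ≤ ∑ i, ‖x i‖ * ‖y i‖ := by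
  set c : ι → ι → ℝ := fun i j => ⟪u i, w j⟫
  set d : ι → ι → ℝ := fun i j => ⟪NormedSpace.normalize (x i), NormedSpace.normalize (y j)⟫
  have hc : (Matrix.of fun i j => c i j ^ 2).IsDoublySubstochastic :=
    isDoublySubstochastic_of_inner_sq hu.2 (fun i => (hu.1 i).le) hw.2 (fun i => (hw.1 i).le)
  have hd : (Matrix.of fun i j => d i j ^ 2).IsDoublySubstochastic :=
    isDoublySubstochastic_of_inner_sq (pairwise_inner_normalize_eq_zero hx)
      (fun i => norm_normalize_le_one _) (pairwise_inner_normalize_eq_zero hy)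
      (fun i => norm_normalize_le_one _)
  have hE := convex_isDoublySubstochastic hc hd (by norm_num : (0 : ℝ) ≤ 1 / 2)
    (by norm_num : (0 : ℝ) ≤ 1 / 2) (by norm_num)
  calc ∑ i, ∑ j, ⟪u i, w j⟫ * ⟪x i, y j⟫
      = ∑ i, ∑ j, ‖x i‖ * ‖y j‖ * (c i j * d i j) := by
        simp only [c, d, inner_eq_norm_mul_norm_mul_inner_normalize (x _)]
        exact sum_congr rfl fun i _ => sum_congr rfl fun j _ => by ring
    _ ≤ ∑ i, ∑ j, ‖x i‖ * ‖y j‖ * ((1 / 2 : ℝ) • Matrix.of (fun i j => c i j ^ 2) +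
          (1 / 2 : ℝ) • Matrix.of (fun i j => d i j ^ 2)) i j :=
        sum_le_sum fun i _ => sum_le_sum fun j _ => mul_le_mul_of_nonneg_left
          (by simp only [Matrix.add_apply, Matrix.smul_apply, of_apply, smul_eq_mul]
              nlinarith [sq_nonneg (c i j - d i j)])
          (mul_nonneg (norm_nonneg _) (norm_nonneg _))
    _ ≤ ∑ i, ‖x i‖ * ‖y i‖ :=
        hE.sum_mul_mul_le_sum_mul (fun i => norm_nonneg _) (fun i => norm_nonneg _) hxy

end InnerProductSpace

namespace Matrix

theorem trace_transpose_mul_eq_sum_inner_mul_inner {ι κ : Type*} [Fintype ι] [DecidableEq ι]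
    [Fintype κ] (u w : OrthonormalBasis ι ℝ (EuclideanSpace ℝ ι)) (M N : Matrix ι κ ℝ) :
    trace (Mᵀ * N) =
      ∑ i, ∑ j, ⟪u i, w j⟫ * ⟪toEuclideanLin Mᵀ (u i), toEuclideanLin Nᵀ (w j)⟫ := by
  set column : Matrix ι κ ℝ → κ → EuclideanSpace ℝ ι := fun M b => WithLp.toLp 2 fun a => M a b
  have coord : ∀ (M : Matrix ι κ ℝ) (v : EuclideanSpace ℝ ι) (b : κ),
      toEuclideanLin Mᵀ v b = ⟪column M b, v⟫ := by
    intro M v b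
    simp [column, toLpLin_apply, mulVec, dotProduct, PiLp.inner_apply, mul_comm]
  calc trace (Mᵀ * N) = ∑ b, ⟪column M b, column N b⟫ := by
        simp [column, trace, mul_apply, PiLp.inner_apply, mul_comm]
    _ = ∑ b, ∑ i, ∑ j, ⟪column M b, u i⟫ * ⟪u i, w j⟫ * ⟪w j, column N b⟫ := by
        refine sum_congr rfl fun b _ => ?_
        rw [← u.sum_inner_mul_inner]
        refine sum_congr rfl fun i _ => ?_
        rw [← w.sum_inner_mul_inner (u i), mul_sum]
        simp only [mul_assoc]
    _ = _ := by
        rw [sum_comm]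
        refine sum_congr rfl fun i _ => ?_
        rw [sum_comm]
        refine sum_congr rfl fun j _ => ?_
        simp only [PiLp.inner_apply (toEuclideanLin Mᵀ _), coord, mul_sum]
        refine sum_congr rfl fun b _ => ?_
        rw [real_inner_comm (w j) (column N b), RCLike.inner_apply, conj_trivial]
        ring

theorem inner_toEuclideanLin_transpose_eigenvectorBasis {ι κ : Type*} [Fintype ι] [DecidableEq ι]
    [Fintype κ] (A : Matrix ι κ ℝ) (i k : ι) :
    ⟪toEuclideanLin Aᵀ ((isHermitian_mul_conjTranspose_self A).eigenvectorBasis i),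
      toEuclideanLin Aᵀ ((isHermitian_mul_conjTranspose_self A).eigenvectorBasis k)⟫ =
      if i = k then (isHermitian_mul_conjTranspose_self A).eigenvalues i else 0 := by
  set hA := isHermitian_mul_conjTranspose_self A
  set b := hA.eigenvectorBasis
  calc ⟪toEuclideanLin Aᵀ (b i), toEuclideanLin Aᵀ (b k)⟫
      = ⟪b i, WithLp.toLp 2 ((A * Aᴴ) *ᵥ b k)⟫ := by
        simp only [EuclideanSpace.inner_eq_star_dotProduct, toLpLin_apply, star_trivial]
        rw [dotProduct_comm, mulVec_transpose, ← dotProduct_mulVec, mulVec_mulVec,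
          conjTranspose_eq_transpose_of_trivial, dotProduct_comm]
    _ = hA.eigenvalues k * ⟪b i, b k⟫ := by
        rw [hA.mulVec_eigenvectorBasis, WithLp.toLp_smul, real_inner_smul_right]
    _ = _ := by
        rw [orthonormal_iff_ite.1 b.orthonormal]
        split_ifs with h <;> simp [h]

end Matrix

theorem singularValues_antitone {m n : ℕ} (A : Matrix (Fin m) (Fin n) ℝ) :
    Antitone (singularValues A) :=
  fun _ _ h => neg_le_neg_iff.1 (Tuple.monotone_sort (fun j => -svUnsorted A j) h)

theorem exists_orthonormalBasis_singularValues {m n : ℕ} (A : Matrix (Fin m) (Fin n) ℝ) :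
    ∃ u : OrthonormalBasis (Fin m) ℝ (EuclideanSpace ℝ (Fin m)),
      (Pairwise fun k l => ⟪toEuclideanLin Aᵀ (u k), toEuclideanLin Aᵀ (u l)⟫ = 0) ∧
      ∀ k, ‖toEuclideanLin Aᵀ (u k)‖ = singularValues A k := by
  set π := Tuple.sort fun j => -svUnsorted A j
  refine ⟨(isHermitian_mul_conjTranspose_self A).eigenvectorBasis.reindex π.symm,
    fun k l hkl => ?_, fun k => ?_⟩
  · simp only [OrthonormalBasis.reindex_apply, Equiv.symm_symm,
      inner_toEuclideanLin_transpose_eigenvectorBasis, π.injective.ne hkl, if_false]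
  · simp only [OrthonormalBasis.reindex_apply, Equiv.symm_symm, norm_eq_sqrt_real_inner,
      inner_toEuclideanLin_transpose_eigenvectorBasis, if_true]
    rfl

theorem von_neumann_trace_inequality_general {m n : ℕ}
    (A B : Matrix (Fin m) (Fin n) ℝ) :
    Matrix.trace (Matrix.transpose A * B) ≤ ∑ i : Fin m, singularValues A i * singularValues B i := by
  obtain ⟨u, hxo, hx⟩ := exists_orthonormalBasis_singularValues A
  obtain ⟨w, hyo, hy⟩ := exists_orthonormalBasis_singularValues B
  have hmono :
      Monovary (fun k => ‖toEuclideanLin Aᵀ (u k)‖) fun k => ‖toEuclideanLin Bᵀ (w k)‖ := by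
    simpa only [hx, hy] using (singularValues_antitone A).monovary (singularValues_antitone B)
  calc trace (Aᵀ * B)
      = ∑ i, ∑ j, ⟪u i, w j⟫ * ⟪toEuclideanLin Aᵀ (u i), toEuclideanLin Bᵀ (w j)⟫ :=
        trace_transpose_mul_eq_sum_inner_mul_inner u w A B
    _ ≤ ∑ k, ‖toEuclideanLin Aᵀ (u k)‖ * ‖toEuclideanLin Bᵀ (w k)‖ :=
        sum_inner_mul_inner_le_sum_norm_mul_norm u.orthonormal w.orthonormal hxo hyo hmono
    _ = ∑ k, singularValues A k * singularValues B k := by simp only [hx, hy]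

/-- von Neumann's trace inequality. -/
theorem von_neumann_trace_inequality {m n : ℕ} (hmn : m ≤ n)
    (A B : Matrix (Fin m) (Fin n) ℝ) :
    Matrix.trace (Matrix.transpose A * B) ≤ ∑ i : Fin m, singularValues A i * singularValues B i :=
  von_neumann_trace_inequality_general A B
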